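/- Tree substitution preserves coinductive equivalence: if A ≈_T A' and B ≈_T B' then A[B/V] ≈_T A'[B'/V]. -/

import Mathlib

namespace CAP

/-- μ-types: variables, constants, compounds D @ A, functions A ⊃ B, unions A ⊕ B, recursive μV.A -/
inductive MuTy : Type
  | tvar : ℕ → MuTy
  | tconst : ℕ → MuTy
  | comp : MuTy → MuTy → MuTy
  | arr : MuTy → MuTy → MuTy
  | union : MuTy → MuTy → MuTy
  | mu : ℕ → MuTy → MuTy
  deriving DecidableEq

namespace MuTy

/-- substitution of `B` for variable `V` -/
def subst (V : ℕ) (B : MuTy) : MuTy → MuTy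
  | tvar n => if n = V then B else tvar n
  | tconst c => tconst c
  | comp A₁ A₂ => comp (subst V B A₁) (subst V B A₂)
  | arr A₁ A₂ => arr (subst V B A₁) (subst V B A₂)
  | union A₁ A₂ => union (subst V B A₁) (subst V B A₂)
  | mu W A => if W = V then mu W A else mu W (subst V B A)

/-- `V` occurs in the type only under `comp` or `arr` (if at all) -/
def Guarded (V : ℕ) : MuTy → Prop
  | tvar n => n ≠ V
  | tconst _ => True
  | comp _ _ => True
  | arr _ _ => True
  | union A₁ A₂ => Guarded V A₁ ∧ Guarded V A₂
  | mu W A => W = V ∨ Guarded V A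

/-- contractive μ-types -/
def Contractive : MuTy → Prop
  | tvar _ => True
  | tconst _ => True
  | comp A₁ A₂ => Contractive A₁ ∧ Contractive A₂
  | arr A₁ A₂ => Contractive A₁ ∧ Contractive A₂
  | union A₁ A₂ => Contractive A₁ ∧ Contractive A₂
  | mu V A => Guarded V A ∧ Contractive A

/-- free variables -/
def fv : MuTy → Set ℕ
  | tvar n => {n}
  | tconst _ => ∅
  | comp A₁ A₂ => fv A₁ ∪ fv A₂
  | arr A₁ A₂ => fv A₁ ∪ fv A₂
  | union A₁ A₂ => fv A₁ ∪ fv A₂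
  | mu V A => fv A \ {V}

/-- number of consecutive μ binders at the root -/
def headMu : MuTy → ℕ
  | mu _ A => headMu A + 1
  | _ => 0

end MuTy

/-- inductive μ-type equivalence ≈ -/
inductive MuEq : MuTy → MuTy → Prop
  | refl (A) : MuEq A A
  | trans : MuEq A B → MuEq B C → MuEq A C
  | symm : MuEq A B → MuEq B A
  | arrCong : MuEq A A' → MuEq B B' → MuEq (.arr A B) (.arr A' B')
  | compCong : MuEq D D' → MuEq A A' → MuEq (.comp D A) (.comp D' A')
  | unionIdem (A) : MuEq (.union A A) A
  | unionComm (A B) : MuEq (.union A B) (.union B A)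
  | unionAssoc (A B C) : MuEq (.union A (.union B C)) (.union (.union A B) C)
  | unionCong : MuEq A A' → MuEq B B' → MuEq (.union A B) (.union A' B')
  | muCong : MuEq A B → MuEq (.mu V A) (.mu V B)
  | fold (V A) : MuEq (.mu V A) (MuTy.subst V (.mu V A) A)
  | contr : MuEq A (MuTy.subst V A B) → (MuTy.mu V B).Contractive → MuEq A (.mu V B)

/-- inductive μ-type subtyping, with a context of variable assumptions -/
inductive MuLe : Set (ℕ × ℕ) → MuTy → MuTy → Prop
  | refl (S A) : MuLe S A A
  | hyp : (V, W) ∈ S → MuLe S (.tvar V) (.tvar W)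
  | eq : MuEq A B → MuLe S A B
  | trans : MuLe S A B → MuLe S B C → MuLe S A C
  | compCong : MuLe S D D' → MuLe S A A' → MuLe S (.comp D A) (.comp D' A')
  | func : MuLe S A' A → MuLe S B B' → MuLe S (.arr A B) (.arr A' B')
  | unionL : MuLe S A C → MuLe S B C → MuLe S (.union A B) C
  | unionR1 : MuLe S A B → MuLe S A (.union B C)
  | unionR2 : MuLe S A C → MuLe S A (.union B C)
  | recRule : MuLe (insert (V, W) S) A B → W ∉ A.fv → V ∉ B.fv →
      MuLe S (.mu V A) (.mu W B)

/-- binary association trees of unions, used to express n-fold unions with arbitrary association -/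
inductive UTree : Type
  | leaf : MuTy → UTree
  | node : UTree → UTree → UTree

def UTree.toTy : UTree → MuTy
  | .leaf A => A
  | .node l r => .union l.toTy r.toTy

def UTree.leaves : UTree → List MuTy
  | .leaf A => [A]
  | .node l r => l.leaves ++ r.leaves

/-! ## Infinite types as trees -/

inductive Atom : Type
  | var : ℕ → Atom
  | const : ℕ → Atom
  | bullet : Atom
  deriving DecidableEq

inductive Lab : Type
  | atom : Atom → Lab
  | comp : Lab
  | arr : Lab
  | union : Lab
  deriving DecidableEq

def Lab.IsBinary : Lab → Prop
  | .comp => True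
  | .arr => True
  | .union => True
  | .atom _ => False

/-- possibly infinite trees: partial labelling of positions -/
abbrev ITree : Type := List Bool → Option Lab

namespace ITree

def child (A : ITree) (b : Bool) : ITree := fun π => A (b :: π)

/-- well-formed infinite types: rooted, prefix-closed with binary branching,
and no infinite branch consisting solely of ⊕ -/
def Wf (A : ITree) : Prop :=
  (A []).isSome ∧
  (∀ π b, (A (π ++ [b])).isSome ↔ ∃ l, A π = some l ∧ l.IsBinary) ∧
  (∀ (π : List Bool) (f : ℕ → Bool), ∃ n, A (π ++ (List.range n).map f) ≠ some Lab.union)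

end ITree

/-- maximal union decomposition: the list of non-union components of a tree -/
inductive UnionComps : ITree → List ITree → Prop
  | nonUnion (A : ITree) : A [] ≠ some Lab.union → UnionComps A [A]
  | union (A : ITree) (l r : List ITree) :
      A [] = some Lab.union →
      UnionComps (A.child false) l → UnionComps (A.child true) r →
      UnionComps A (l ++ r)

/-- the rule functional for coinductive tree equivalence -/
def EqF (R : ITree → ITree → Prop) (A B : ITree) : Prop :=
  (∃ a : Atom, A [] = some (Lab.atom a) ∧ B [] = some (Lab.atom a)) ∨
  (A [] = some Lab.comp ∧ B [] = some Lab.comp ∧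
    R (A.child false) (B.child false) ∧ R (A.child true) (B.child true)) ∨
  (A [] = some Lab.arr ∧ B [] = some Lab.arr ∧
    R (A.child false) (B.child false) ∧ R (A.child true) (B.child true)) ∨
  (∃ (la lb : List ITree), UnionComps A la ∧ UnionComps B lb ∧
    2 < la.length + lb.length ∧
    (∃ f : Fin la.length → Fin lb.length, ∀ i, R (la.get i) (lb.get (f i))) ∧
    (∃ g : Fin lb.length → Fin la.length, ∀ j, R (la.get (g j)) (lb.get j)))

/-- coinductive tree equivalence ≈_T : the greatest fixed point of `EqF` -/
def TreeEq (A B : ITree) : Prop :=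
  ∃ R : ITree → ITree → Prop, (∀ X Y, R X Y → EqF R X Y) ∧ R A B

/-- the rule functional for coinductive tree subtyping -/
def LeF (R : ITree → ITree → Prop) (A B : ITree) : Prop :=
  (∃ a : Atom, A [] = some (Lab.atom a) ∧ B [] = some (Lab.atom a)) ∨
  (A [] = some Lab.comp ∧ B [] = some Lab.comp ∧
    R (A.child false) (B.child false) ∧ R (A.child true) (B.child true)) ∨
  (A [] = some Lab.arr ∧ B [] = some Lab.arr ∧
    R (B.child false) (A.child false) ∧ R (A.child true) (B.child true)) ∨
  (∃ (la lb : List ITree), UnionComps A la ∧ UnionComps B lb ∧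
    2 < la.length + lb.length ∧
    (∃ f : Fin la.length → Fin lb.length, ∀ i, R (la.get i) (lb.get (f i))))

/-- coinductive tree subtyping ≤_T : the greatest fixed point of `LeF` -/
def TreeLe (A B : ITree) : Prop :=
  ∃ R : ITree → ITree → Prop, (∀ X Y, R X Y → LeF R X Y) ∧ R A B

open Classical in
/-- tree substitution of tree `B` for the variable `V` -/
noncomputable def substT (V : ℕ) (B A : ITree) : ITree := fun π =>
  if h : ∃ ps : List Bool × List Bool,
      π = ps.1 ++ ps.2 ∧ A ps.1 = some (Lab.atom (Atom.var V))
  then B (Classical.choose h).2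
  else A π

/-- the single-node tree consisting of an atom -/
def atomTree (a : Atom) : ITree := fun π => if π = [] then some (Lab.atom a) else none

/-- a tree with binary root label `l` and subtrees `A₁`, `A₂` -/
def binTree (l : Lab) (A₁ A₂ : ITree) : ITree := fun π =>
  match π with
  | [] => some l
  | false :: π' => A₁ π'
  | true :: π' => A₂ π'

/-- effective depth of a position: union nodes do not consume depth -/
def edepth (A : ITree) : List Bool → ℕ
  | [] => 0
  | b :: π => (if A [] = some Lab.union then 0 else 1) + edepth (A.child b) π

open Classical in
/-- truncation of a tree at depth `k`; cut points are replaced by the constant • -/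
noncomputable def cut (k : ℕ) (A : ITree) : ITree := fun π =>
  if ∀ p, p <+: π → p ≠ π → edepth A p < k then
    (if edepth A π < k then A π
     else if (A π).isSome then some (Lab.atom Atom.bullet) else none)
  else none

/-- labels of the tree interpretation of a μ-type (μ is unfolded completely) -/
inductive HasLab : MuTy → List Bool → Lab → Prop
  | tvar (n) : HasLab (.tvar n) [] (.atom (.var n))
  | tconst (c) : HasLab (.tconst c) [] (.atom (.const c))
  | compRoot (A B) : HasLab (.comp A B) [] .comp
  | compL : HasLab A π l → HasLab (.comp A B) (false :: π) l
  | compR : HasLab B π l → HasLab (.comp A B) (true :: π) l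
  | arrRoot (A B) : HasLab (.arr A B) [] .arr
  | arrL : HasLab A π l → HasLab (.arr A B) (false :: π) l
  | arrR : HasLab B π l → HasLab (.arr A B) (true :: π) l
  | unionRoot (A B) : HasLab (.union A B) [] .union
  | unionL : HasLab A π l → HasLab (.union A B) (false :: π) l
  | unionR : HasLab B π l → HasLab (.union A B) (true :: π) l
  | mu : HasLab (MuTy.subst V (.mu V A) A) π l → HasLab (.mu V A) π l

open Classical in
/-- the tree interpretation ⟦·⟧ of μ-types -/
noncomputable def interp (A : MuTy) : ITree := fun π =>
  if h : ∃ l, HasLab A π l then some (Classical.choose h) else none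

/-- application of a parallel substitution to a μ-type -/
def applyS (σ : ℕ → MuTy) : MuTy → MuTy
  | .tvar n => σ n
  | .tconst c => .tconst c
  | .comp A B => .comp (applyS σ A) (applyS σ B)
  | .arr A B => .arr (applyS σ A) (applyS σ B)
  | .union A B => .union (applyS σ A) (applyS σ B)
  | .mu V A => .mu V (applyS (Function.update σ V (.tvar V)) A)

/-- outermost type constructor (head μ binders are unfolded/skipped) -/
inductive HeadC : Type
  | hvar : ℕ → HeadC
  | hconst : ℕ → HeadC
  | hcomp : HeadC
  | harr : HeadC
  | hunion : HeadC
  deriving DecidableEq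

def headOf : MuTy → HeadC
  | .tvar n => .hvar n
  | .tconst c => .hconst c
  | .comp _ _ => .hcomp
  | .arr _ _ => .harr
  | .union _ _ => .hunion
  | .mu _ A => headOf A

/-- non-union μ-types: after unfolding head μ binders the top constructor is not ⊕ -/
def NonUnion : MuTy → Prop
  | .union _ _ => False
  | .mu _ A => NonUnion A
  | _ => True

/-- union contexts U ::= □ | U ⊕ A | A ⊕ U -/
inductive UCtx : Type
  | hole : UCtx
  | left : UCtx → MuTy → UCtx
  | right : MuTy → UCtx → UCtx

def UCtx.fill : UCtx → MuTy → MuTy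
  | .hole, A => A
  | .left U B, A => .union (U.fill A) B
  | .right B U, A => .union B (U.fill A)

end CAP

/-!
A substituted pair `(A[B/V], A'[B'/V])` with `A ≈_T A'` unfolds by one rule of `EqF`: matching
atoms `V` become `B` and `B'`, other atoms and binary nodes are kept, and the children of binary
nodes are again substituted pairs. For unions, the maximal components of `A[B/V]` are those of
`A`, with each component that is the atom `V` replaced by the components of `B`; so the matching
of components of `A` and `A'` lifts to one of the substituted components. Hence substituted
pairs, together with `≈_T` itself, form a post-fixed point of `EqF`.
-/

theorem List.length_le_length_flatMap {α β : Type*} {l : List α} {f : α → List β}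
    (h : ∀ a ∈ l, f a ≠ []) : l.length ≤ (l.flatMap f).length := by
  induction l with
  | nil => simp
  | cons a l ih =>
    simp only [List.forall_mem_cons] at h
    simp only [List.flatMap_cons, List.length_append, List.length_cons]
    have := List.length_pos_iff.2 h.1
    have := ih h.2
    omega

namespace CAP

namespace ITree

variable {A : ITree}

theorem Wf.eq_none_append (w : A.Wf) {π : List Bool} (h : A π = none) (q : List Bool) :
    A (π ++ q) = none := by
  induction q generalizing π with
  | nil => simpa using h
  | cons b q ih =>
    have hb : A (π ++ [b]) = none := by
      rw [← Option.not_isSome_iff_eq_none, w.2.1 π b]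
      simp [h]
    simpa using ih hb

theorem Wf.eq_none_of_atom (w : A.Wf) {π : List Bool} {a : Atom} (h : A π = some (.atom a))
    (b : Bool) (q : List Bool) : A (π ++ b :: q) = none := by
  have hb : A (π ++ [b]) = none := by
    rw [← Option.not_isSome_iff_eq_none, w.2.1 π b]
    simp [h, Lab.IsBinary]
  simpa using w.eq_none_append hb q

theorem Wf.atom_prefix_unique (w : A.Wf) {p₁ s₁ p₂ s₂ : List Bool} {a₁ a₂ : Atom}
    (e : p₁ ++ s₁ = p₂ ++ s₂) (h₁ : A p₁ = some (.atom a₁)) (h₂ : A p₂ = some (.atom a₂)) :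
    p₁ = p₂ := by
  rcases List.append_eq_append_iff.1 e with ⟨_ | ⟨b, q⟩, rfl, -⟩ | ⟨_ | ⟨b, q⟩, rfl, -⟩
  · simp
  · simp [w.eq_none_of_atom h₁] at h₂
  · simp
  · simp [w.eq_none_of_atom h₂] at h₁

theorem Wf.child (w : A.Wf) {l : Lab} (hA : A [] = some l) (hl : l.IsBinary) (b : Bool) :
    (A.child b).Wf := by
  refine ⟨?_, fun π b' => w.2.1 (b :: π) b', fun π f => w.2.2 (b :: π) f⟩
  simpa [ITree.child] using (w.2.1 [] b).2 ⟨l, hA, hl⟩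

end ITree

section Substitution

variable {V : ℕ} {A B : ITree}

theorem substT_append (w : A.Wf) {p : List Bool} (h : A p = some (.atom (.var V)))
    (s : List Bool) : substT V B A (p ++ s) = B s := by
  have hex : ∃ ps : List Bool × List Bool,
      p ++ s = ps.1 ++ ps.2 ∧ A ps.1 = some (.atom (.var V)) := ⟨(p, s), rfl, h⟩
  obtain ⟨e, hc⟩ := Classical.choose_spec hex
  rw [← w.atom_prefix_unique e h hc] at e
  rw [substT, dif_pos hex, ← List.append_cancel_left e]

theorem substT_of_root_eq_var (w : A.Wf) (h : A [] = some (.atom (.var V))) :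
    substT V B A = B :=
  funext (substT_append w h)

theorem substT_root (h : A [] ≠ some (.atom (.var V))) : substT V B A [] = A [] := by
  rw [substT, dif_neg]
  rintro ⟨⟨p, s⟩, e, hp⟩
  obtain rfl : p = [] := (List.append_eq_nil_iff.1 e.symm).1
  exact h hp

theorem substT_child (w : A.Wf) {l : Lab} (hA : A [] = some l) (hl : l.IsBinary) (b : Bool) :
    (substT V B A).child b = substT V B (A.child b) := by
  funext π
  by_cases hc : ∃ ps : List Bool × List Bool,
      π = ps.1 ++ ps.2 ∧ A.child b ps.1 = some (.atom (.var V))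
  · obtain ⟨⟨p, s⟩, rfl, hp⟩ := hc
    exact (substT_append w hp s).trans (substT_append (w.child hA hl b) hp s).symm
  · have hc' : ¬ ∃ ps : List Bool × List Bool,
        b :: π = ps.1 ++ ps.2 ∧ A ps.1 = some (.atom (.var V)) := by
      rintro ⟨⟨_ | ⟨b', p⟩, s⟩, e, hp⟩
      · rw [hA] at hp
        cases hp
        exact hl
      · obtain ⟨rfl, rfl⟩ := List.cons_eq_cons.1 e
        exact hc ⟨(p, s), rfl, hp⟩
    show substT V B A (b :: π) = substT V B (A.child b) π
    rw [substT, dif_neg hc', substT, dif_neg hc]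
    rfl

end Substitution

section UnionComps

variable {A : ITree} {l : List ITree}

theorem UnionComps.eq_singleton (h : UnionComps A l) (hA : A [] ≠ some .union) : l = [A] := by
  cases h with
  | nonUnion => rfl
  | union _ _ _ hu => exact absurd hu hA

theorem UnionComps.root_ne_union (h : UnionComps A l) : ∀ C ∈ l, C [] ≠ some .union := by
  induction h with
  | nonUnion A hA => simpa using hA
  | union A l r _ _ _ ihl ihr => simpa [or_imp, forall_and] using ⟨ihl, ihr⟩

theorem UnionComps.ne_nil (h : UnionComps A l) : l ≠ [] := by
  induction h with
  | nonUnion => simp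
  | union A l r _ _ _ ihl => simp [ihl]

theorem UnionComps.wf (h : UnionComps A l) (w : A.Wf) : ∀ C ∈ l, C.Wf := by
  induction h with
  | nonUnion A hA => simpa using w
  | union A l r hu _ _ ihl ihr =>
    simpa [or_imp, forall_and] using
      ⟨ihl (w.child hu trivial false), ihr (w.child hu trivial true)⟩

end UnionComps

def ListMatch {α β : Type*} (R : α → β → Prop) (l : List α) (l' : List β) : Prop :=
  (∀ a ∈ l, ∃ b ∈ l', R a b) ∧ (∀ b ∈ l', ∃ a ∈ l, R a b)

namespace ListMatch

variable {α β γ δ : Type*} {R S : α → β → Prop} {l : List α} {l' : List β}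

theorem iff_exists_fin : ListMatch R l l' ↔
    (∃ f : Fin l.length → Fin l'.length, ∀ i, R (l.get i) (l'.get (f i))) ∧
    (∃ g : Fin l'.length → Fin l.length, ∀ j, R (l.get (g j)) (l'.get j)) := by
  refine and_congr ⟨fun h => ?_, ?_⟩ ⟨fun h => ?_, ?_⟩
  · choose f hf using fun i => List.mem_iff_get.1 (h _ (l.get_mem i)).choose_spec.1
    exact ⟨f, fun i => (hf i).symm ▸ (h _ (l.get_mem i)).choose_spec.2⟩
  · rintro ⟨f, hf⟩ a ha
    obtain ⟨i, rfl⟩ := List.mem_iff_get.1 ha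
    exact ⟨_, l'.get_mem (f i), hf i⟩
  · choose g hg using fun j => List.mem_iff_get.1 (h _ (l'.get_mem j)).choose_spec.1
    exact ⟨g, fun j => (hg j).symm ▸ (h _ (l'.get_mem j)).choose_spec.2⟩
  · rintro ⟨g, hg⟩ b hb
    obtain ⟨j, rfl⟩ := List.mem_iff_get.1 hb
    exact ⟨_, l.get_mem (g j), hg j⟩

theorem mono (h : ListMatch R l l') (hRS : ∀ a b, R a b → S a b) : ListMatch S l l' :=
  ⟨fun a ha => (h.1 a ha).imp fun _ => And.imp_right (hRS _ _),
    fun b hb => (h.2 b hb).imp fun _ => And.imp_right (hRS _ _)⟩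

theorem singleton {a : α} {b : β} (h : R a b) : ListMatch R [a] [b] := by
  simp [ListMatch, h]

theorem flatMap {T : γ → δ → Prop} {g : α → List γ} {g' : β → List δ} (h : ListMatch R l l')
    (hg : ∀ a ∈ l, ∀ b ∈ l', R a b → ListMatch T (g a) (g' b)) :
    ListMatch T (l.flatMap g) (l'.flatMap g') := by
  constructor
  · intro x hx
    obtain ⟨a, ha, hxa⟩ := List.mem_flatMap.1 hx
    obtain ⟨b, hb, hab⟩ := h.1 a ha
    obtain ⟨y, hy, hxy⟩ := (hg a ha b hb hab).1 x hxa
    exact ⟨y, List.mem_flatMap.2 ⟨b, hb, hy⟩, hxy⟩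
  · intro y hy
    obtain ⟨b, hb, hyb⟩ := List.mem_flatMap.1 hy
    obtain ⟨a, ha, hab⟩ := h.2 b hb
    obtain ⟨x, hx, hxy⟩ := (hg a ha b hb hab).2 y hyb
    exact ⟨x, List.mem_flatMap.2 ⟨a, ha, hx⟩, hxy⟩

end ListMatch

section TreeEq

variable {R S : ITree → ITree → Prop} {A B : ITree}

theorem EqF.mono (h : EqF R A B) (hRS : ∀ X Y, R X Y → S X Y) : EqF S A B := by
  rcases h with h | ⟨h₁, h₂, hl, hr⟩ | ⟨h₁, h₂, hl, hr⟩ | ⟨la, lb, hA, hB, hlen, hf, hg⟩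
  · exact .inl h
  · exact .inr <| .inl ⟨h₁, h₂, hRS _ _ hl, hRS _ _ hr⟩
  · exact .inr <| .inr <| .inl ⟨h₁, h₂, hRS _ _ hl, hRS _ _ hr⟩
  · obtain ⟨hf, hg⟩ := ListMatch.iff_exists_fin.1 ((ListMatch.iff_exists_fin.2 ⟨hf, hg⟩).mono hRS)
    exact .inr <| .inr <| .inr ⟨la, lb, hA, hB, hlen, hf, hg⟩

theorem EqF.of_unionComps {la lb : List ITree} (hA : UnionComps A la) (hB : UnionComps B lb)
    (hlen : 2 < la.length + lb.length) (hm : ListMatch R la lb) : EqF R A B :=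
  .inr <| .inr <| .inr ⟨la, lb, hA, hB, hlen, ListMatch.iff_exists_fin.1 hm⟩

theorem TreeEq.eqF (h : TreeEq A B) : EqF TreeEq A B := by
  obtain ⟨R, hR, hAB⟩ := h
  exact (hR _ _ hAB).mono fun X Y hXY => ⟨R, hR, hXY⟩

theorem TreeEq.coinduct_upTo (hR : ∀ X Y, R X Y → EqF (fun X Y => R X Y ∨ TreeEq X Y) X Y)
    (h : R A B) : TreeEq A B := by
  refine ⟨fun X Y => R X Y ∨ TreeEq X Y, ?_, .inl h⟩
  rintro X Y (hXY | hXY)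
  · exact hR X Y hXY
  · exact hXY.eqF.mono fun _ _ => .inr

theorem TreeEq.root_eq (h : TreeEq A B) (hA : A [] ≠ some .union) (hB : B [] ≠ some .union) :
    A [] = B [] := by
  rcases h.eqF with ⟨a, h₁, h₂⟩ | ⟨h₁, h₂, -⟩ | ⟨h₁, h₂, -⟩ | ⟨la, lb, hla, hlb, hlen, -⟩
  any_goals rw [h₁, h₂]
  rw [hla.eq_singleton hA, hlb.eq_singleton hB] at hlen
  simp at hlen

theorem TreeEq.exists_unionComps (h : TreeEq A B) :
    ∃ la lb, UnionComps A la ∧ UnionComps B lb ∧ ListMatch TreeEq la lb := by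
  rcases h.eqF with ⟨a, h₁, h₂⟩ | ⟨h₁, h₂, -⟩ | ⟨h₁, h₂, -⟩ | ⟨la, lb, hla, hlb, -, hf, hg⟩
  rotate_right
  · exact ⟨la, lb, hla, hlb, ListMatch.iff_exists_fin.2 ⟨hf, hg⟩⟩
  all_goals exact ⟨[A], [B], .nonUnion _ (by simp [h₁]), .nonUnion _ (by simp [h₂]),
    .singleton h⟩

end TreeEq

section SubstT

variable {V : ℕ} {A A' B B' : ITree}

/-- The maximal union components of `C[B/V]` for a non-union tree `C`, given those of `B`. -/
noncomputable def substComps (V : ℕ) (B : ITree) (lb : List ITree) (C : ITree) : List ITree :=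
  if C [] = some (.atom (.var V)) then lb else [substT V B C]

theorem substComps_ne_nil {lb : List ITree} (hlb : UnionComps B lb) (C : ITree) :
    substComps V B lb C ≠ [] := by
  unfold substComps
  split_ifs <;> simp [hlb.ne_nil]

theorem UnionComps.substT {lb la : List ITree} (hlb : UnionComps B lb) (hla : UnionComps A la)
    (w : A.Wf) : UnionComps (substT V B A) (la.flatMap (substComps V B lb)) := by
  induction hla with
  | nonUnion A hA =>
    by_cases hV : A [] = some (.atom (.var V))
    · simpa [substComps, hV, substT_of_root_eq_var w hV] using hlb
    · simpa [substComps, hV] using UnionComps.nonUnion _ (by rwa [substT_root hV])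
  | union A l r hu _ _ ihl ihr =>
    rw [List.flatMap_append]
    refine .union _ _ _ ?_ ?_ ?_
    · rwa [substT_root (by simp [hu])]
    · rw [substT_child w hu trivial]
      exact ihl (w.child hu trivial false)
    · rw [substT_child w hu trivial]
      exact ihr (w.child hu trivial true)

def SubstPair (V : ℕ) (B B' X Y : ITree) : Prop :=
  ∃ A A', A.Wf ∧ A'.Wf ∧ TreeEq A A' ∧ X = substT V B A ∧ Y = substT V B' A'

theorem SubstPair.child (w : A.Wf) (w' : A'.Wf) {l : Lab} (hA : A [] = some l)
    (hA' : A' [] = some l) (hl : l.IsBinary) {b : Bool} (h : TreeEq (A.child b) (A'.child b)) :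
    SubstPair V B B' ((substT V B A).child b) ((substT V B' A').child b) := by
  rw [substT_child w hA hl, substT_child w' hA' hl]
  exact ⟨_, _, w.child hA hl b, w'.child hA' hl b, h, rfl, rfl⟩

theorem listMatch_substComps {lb lb' : List ITree} (hB : ListMatch TreeEq lb lb') {C C' : ITree}
    (w : C.Wf) (w' : C'.Wf) (h : TreeEq C C') (hroot : C [] = C' []) :
    ListMatch (fun X Y => SubstPair V B B' X Y ∨ TreeEq X Y)
      (substComps V B lb C) (substComps V B' lb' C') := by
  by_cases hV : C [] = some (.atom (.var V))
  · simpa [substComps, hV, ← hroot] using hB.mono fun _ _ => .inr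
  · simpa [substComps, hV, ← hroot] using
      ListMatch.singleton (.inl ⟨C, C', w, w', h, rfl, rfl⟩)

theorem eqF_substT (w : A.Wf) (w' : A'.Wf) (h : TreeEq A A') (hB : TreeEq B B') :
    EqF (fun X Y => SubstPair V B B' X Y ∨ TreeEq X Y) (substT V B A) (substT V B' A') := by
  rcases h.eqF with ⟨a, h₁, h₂⟩ | ⟨h₁, h₂, hl, hr⟩ | ⟨h₁, h₂, hl, hr⟩ |
    ⟨la, la', hla, hla', hlen, hf, hg⟩
  · by_cases ha : a = .var V
    · subst ha
      rw [substT_of_root_eq_var w h₁, substT_of_root_eq_var w' h₂]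
      exact hB.eqF.mono fun _ _ => .inr
    · refine .inl ⟨a, ?_, ?_⟩
      · rwa [substT_root (by simp [h₁, ha])]
      · rwa [substT_root (by simp [h₂, ha])]
  · refine .inr <| .inl ⟨?_, ?_, ?_, ?_⟩
    · rwa [substT_root (by simp [h₁])]
    · rwa [substT_root (by simp [h₂])]
    · exact .inl (.child w w' h₁ h₂ trivial hl)
    · exact .inl (.child w w' h₁ h₂ trivial hr)
  · refine .inr <| .inr <| .inl ⟨?_, ?_, ?_, ?_⟩
    · rwa [substT_root (by simp [h₁])]
    · rwa [substT_root (by simp [h₂])]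
    · exact .inl (.child w w' h₁ h₂ trivial hl)
    · exact .inl (.child w w' h₁ h₂ trivial hr)
  · obtain ⟨lb, lb', hlb, hlb', hmB⟩ := hB.exists_unionComps
    have hm : ListMatch TreeEq la la' := ListMatch.iff_exists_fin.2 ⟨hf, hg⟩
    refine .of_unionComps (hlb.substT hla w) (hlb'.substT hla' w') ?_ ?_
    · exact hlen.trans_le (Nat.add_le_add (List.length_le_length_flatMap fun C _ => substComps_ne_nil hlb C)
        (List.length_le_length_flatMap fun C _ => substComps_ne_nil hlb' C))
    · refine hm.flatMap fun C hC C' hC' hCC' => listMatch_substComps hmB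
        (hla.wf w C hC) (hla'.wf w' C' hC') hCC' ?_
      exact hCC'.root_eq (hla.root_ne_union C hC) (hla'.root_ne_union C' hC')

end SubstT

theorem stmt9_general (V : ℕ) (A A' B B' : ITree)
    (wA : A.Wf) (wA' : A'.Wf)
    (h1 : TreeEq A A') (h2 : TreeEq B B') :
    TreeEq (substT V B A) (substT V B' A') := by
  refine TreeEq.coinduct_upTo (R := SubstPair V B B') ?_ ⟨A, A', wA, wA', h1, rfl, rfl⟩
  rintro _ _ ⟨_, _, w, w', h, rfl, rfl⟩
  exact eqF_substT w w' h h2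

/-- tree substitution preserves coinductive equivalence:
A ≈_T A' and B ≈_T B' imply A[B/V] ≈_T A'[B'/V]. -/
theorem stmt9 (V : ℕ) (A A' B B' : ITree)
    (wA : A.Wf) (wA' : A'.Wf) (wB : B.Wf) (wB' : B'.Wf)
    (h1 : TreeEq A A') (h2 : TreeEq B B') :
    TreeEq (substT V B A) (substT V B' A') :=
  stmt9_general V A A' B B' wA wA' h1 h2

end CAP
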